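/- Let R be a commutative integral domain and let ⋆ be a semistar operation of finite type on R. Then the following are equivalent: (1) each quasi-⋆-prime ideal of R is the radical of a ⋆-finite ideal; (2) each radical quasi-⋆-ideal of R is the radical of a ⋆-finite ideal; (3) R satisfies the ascending chain condition on radical quasi-⋆-ideals. -/

import Mathlib

open Pointwise

/-- A semistar operation on an integral domain `R` with quotient field `K`:
a map `E ↦ E^⋆` on the nonzero `R`-submodules of `K` satisfying the usual axioms.
(The map is defined on all submodules, but the axioms are only required for the
nonzero ones.) -/
structure SemistarOperation (R K : Type*) [CommRing R] [IsDomain R] [Field K]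
    [Algebra R K] [IsFractionRing R K] where
  star : Submodule R K → Submodule R K
  smul_star : ∀ (x : K), x ≠ 0 → ∀ E : Submodule R K, E ≠ ⊥ → star (x • E) = x • star E
  mono : ∀ E F : Submodule R K, E ≠ ⊥ → E ≤ F → star E ≤ star F
  le_star : ∀ E : Submodule R K, E ≠ ⊥ → E ≤ star E
  star_star : ∀ E : Submodule R K, E ≠ ⊥ → star (star E) = star E

namespace SemistarOperation

variable {R K : Type*} [CommRing R] [IsDomain R] [Field K] [Algebra R K] [IsFractionRing R K]
variable (s : SemistarOperation R K)

/-- `⋆` is of finite type: for every nonzero submodule `E`, the module `E^⋆` is the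
union of the `F^⋆` over the nonzero finitely generated submodules `F ⊆ E`. -/
def FiniteType : Prop :=
  ∀ E : Submodule R K, E ≠ ⊥ → ∀ x : K,
    x ∈ s.star E ↔ ∃ F : Submodule R K, F.FG ∧ F ≠ ⊥ ∧ F ≤ E ∧ x ∈ s.star F

/-- `I^⋆`, for an ideal `I` of `R` (viewing `I` as a submodule of `K`). -/
def idealStar (I : Ideal R) : Submodule R K :=
  s.star (Submodule.map (Algebra.linearMap R K) I)

/-- `I^⋆ ∩ R`, as an ideal of `R`. -/
def contract (I : Ideal R) : Ideal R :=
  Submodule.comap (Algebra.linearMap R K) (s.idealStar I)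

/-- A (nonzero) ideal `I` of `R` is a quasi-`⋆`-ideal if `I^⋆ ∩ R = I`. -/
def IsQuasiStarIdeal (I : Ideal R) : Prop :=
  I ≠ ⊥ ∧ s.contract I = I

/-- A nonzero ideal `L` of `R` is `⋆`-finite if `L^⋆ = F^⋆` for some nonzero
finitely generated ideal `F` of `R`. -/
def IsStarFinite (L : Ideal R) : Prop :=
  L ≠ ⊥ ∧ ∃ F : Ideal R, F.FG ∧ F ≠ ⊥ ∧ s.idealStar F = s.idealStar L

/-- `⋆` is stable: it distributes over finite intersections (of nonzero submodules
with nonzero intersection). -/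
def Stable : Prop :=
  ∀ E F : Submodule R K, E ≠ ⊥ → F ≠ ⊥ → E ⊓ F ≠ ⊥ →
    s.star (E ⊓ F) = s.star E ⊓ s.star F

/-- `⋆-Min(I)`: the set of quasi-`⋆`-prime ideals of `R` minimal over `I`. -/
def starMin (I : Ideal R) : Set (Ideal R) :=
  {P | Minimal (fun Q : Ideal R => Q.IsPrime ∧ s.IsQuasiStarIdeal Q ∧ I ≤ Q) P}

/-- A nonzero ideal `I` of `R` is a `⋆`-SFT-ideal if there are a finitely generated
ideal `J ⊆ I` and a positive integer `k` with `a ^ k ∈ J^⋆` for every `a ∈ I^⋆`. -/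
def IsSFT (I : Ideal R) : Prop :=
  I ≠ ⊥ ∧ ∃ J : Ideal R, J.FG ∧ J ≤ I ∧ ∃ k : ℕ, 0 < k ∧
    ∀ a ∈ s.idealStar I, a ^ k ∈ s.idealStar J

/-- `R` is a `⋆`-SFT-ring if every nonzero ideal of `R` is a `⋆`-SFT-ideal. -/
def IsSFTRing : Prop := ∀ I : Ideal R, I ≠ ⊥ → s.IsSFT I

end SemistarOperation

/-! The closure `c(I) = √(I^⋆ ∩ R)` (`radContract`) is, for `⋆` of finite type, an algebraic
closure operator on the nonzero ideals of `R`, idempotent because `(J^⋆)ⁿ ⊆ (Jⁿ)^⋆`. Its closed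
ideals are exactly the radical quasi-`⋆`-ideals, and a closed ideal is the radical of a `⋆`-finite
ideal iff it is `c(F)` for a finitely generated `F`. So (2) ⇔ (3) is the usual fact that in an
algebraic closure system every closed element is the closure of a compact one iff the closed
elements satisfy the a.c.c. For (1) ⇒ (2), Zorn gives a closed `M` maximal among those not of the
form `c(F)`, and `M` is prime: if `x, y ∉ M` and `x * y ∈ M`, maximality yields finitely generated
`H ⊆ M + (x)` and `H' ⊆ M + (y)` with `M ⊆ c(H) ∩ c(H') ⊆ c(H * H')`, while `H * H' ⊆ M`; so
`M = c(H * H')`. -/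

theorem Submodule.FG.exists_le_of_le_sSup {R M : Type*} [Semiring R] [AddCommMonoid M]
    [Module R M] {J : Submodule R M} (hJ : J.FG) {c : Set (Submodule R M)} (hne : c.Nonempty)
    (hdir : DirectedOn (· ≤ ·) c) (hle : J ≤ sSup c) : ∃ P ∈ c, J ≤ P :=
  (CompleteLattice.isCompactElement_iff_le_of_directed_sSup_le _ J).1
    ((Submodule.fg_iff_compact J).1 hJ) c hne hdir hle

theorem Submodule.exists_fg_le_map_eq_of_le_map {R M N : Type*} [Semiring R] [AddCommMonoid M]
    [AddCommMonoid N] [Module R M] [Module R N] {f : M →ₗ[R] N} (hf : Function.Injective f)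
    {F : Submodule R N} (hF : F.FG) {I : Submodule R M} (hle : F ≤ I.map f) :
    ∃ J : Submodule R M, J.FG ∧ J ≤ I ∧ J.map f = F := by
  have hmap : (F.comap f).map f = F :=
    Submodule.map_comap_eq_of_le (hle.trans LinearMap.map_le_range)
  exact ⟨F.comap f, Submodule.fg_of_fg_map_injective f hf (by rwa [hmap]),
    (Submodule.comap_mono hle).trans (Submodule.comap_map_eq_of_injective hf I).le, hmap⟩

theorem Ideal.sup_span_singleton_mul_sup_span_singleton_le {R : Type*} [CommSemiring R]
    {M : Ideal R} {x y : R} (hxy : x * y ∈ M) :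
    (M ⊔ Ideal.span {x}) * (M ⊔ Ideal.span {y}) ≤ M := by
  rw [Ideal.sup_mul, Ideal.mul_sup (Ideal.span {x}), Ideal.span_singleton_mul_span_singleton]
  exact sup_le Ideal.mul_le_left
    (sup_le Ideal.mul_le_right ((Ideal.span_singleton_le_iff_mem M).2 hxy))

theorem exists_maximal_of_monotone_chain_condition {α : Type*} [PartialOrder α] {P : α → Prop}
    (hacc : ∀ f : ℕ →o α, (∀ n, P (f n)) → ∃ n, ∀ m, n ≤ m → f m = f n)
    {S : Set α} (hS : ∀ a ∈ S, P a) (hne : S.Nonempty) : ∃ M, Maximal (· ∈ S) M := by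
  have : WellFoundedGT {a // P a} := wellFoundedGT_iff_monotone_chain_condition.2 fun f => by
    obtain ⟨n, hn⟩ := hacc ((OrderHom.Subtype.val P).comp f) fun n => (f n).2
    exact ⟨n, fun m hm => Subtype.ext (hn m hm).symm⟩
  obtain ⟨a, ha⟩ := hne
  obtain ⟨M, hMS, hM⟩ :=
    wellFounded_gt.has_min {b : {a // P a} | b.1 ∈ S} ⟨⟨a, hS a ha⟩, ha⟩
  refine ⟨M, hMS, fun b hb hMb => ?_⟩
  by_contra hbM
  exact hM ⟨b, hS b hb⟩ hb (lt_of_le_not_ge hMb hbM)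

namespace SemistarOperation

theorem map_algebraLinearMap_ne_bot {R : Type*} (K : Type*) [CommRing R] [Field K]
    [Algebra R K] [IsFractionRing R K] {I : Ideal R} (hI : I ≠ ⊥) :
    Submodule.map (Algebra.linearMap R K) I ≠ ⊥ := by
  simpa using (Submodule.map_injective_of_injective (f := Algebra.linearMap R K)
    (IsFractionRing.injective R K)).ne hI

variable {R K : Type*} [CommRing R] [IsDomain R] [Field K] [Algebra R K] [IsFractionRing R K]
variable (s : SemistarOperation R K)

theorem mul_star_le {E F : Submodule R K} (hF : F ≠ ⊥) : E * s.star F ≤ s.star (E * F) := by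
  refine Submodule.mul_le.2 fun a ha b hb => ?_
  rcases eq_or_ne a 0 with rfl | ha0
  · rw [zero_mul]; exact zero_mem _
  have haF : a • F ≤ E * F := by
    rintro _ ⟨f, hf, rfl⟩
    exact Submodule.mul_mem_mul ha hf
  have haF0 : a • F ≠ ⊥ := fun h =>
    hF (by rw [← inv_smul_smul₀ ha0 F, h, Submodule.smul_bot'])
  have hab : a * b ∈ s.star (a • F) := by
    rw [s.smul_star a ha0 F hF]
    exact Submodule.smul_mem_pointwise_smul b a _ hb
  exact s.mono _ _ haF0 haF hab

theorem star_mul_star_le {E F : Submodule R K} (hE : E ≠ ⊥) (hF : F ≠ ⊥) :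
    s.star E * s.star F ≤ s.star (E * F) :=
  calc s.star E * s.star F ≤ s.star (s.star E * F) := s.mul_star_le hF
    _ ≤ s.star (s.star (E * F)) := by
      refine s.mono _ _ ?_ ?_
      · exact ne_bot_of_le_ne_bot (mul_ne_zero hE hF) (mul_le_mul_left (s.le_star E hE) F)
      · rw [mul_comm, mul_comm E]; exact s.mul_star_le hE
    _ = s.star (E * F) := s.star_star _ (mul_ne_zero hE hF)

theorem idealStar_mono {I J : Ideal R} (hI : I ≠ ⊥) (h : I ≤ J) :
    s.idealStar I ≤ s.idealStar J :=
  s.mono _ _ (map_algebraLinearMap_ne_bot K hI) (Submodule.map_mono h)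

theorem le_contract {I : Ideal R} (hI : I ≠ ⊥) : I ≤ s.contract I := fun _ hx =>
  s.le_star _ (map_algebraLinearMap_ne_bot K hI) (Submodule.mem_map_of_mem hx)

theorem contract_mono {I J : Ideal R} (hI : I ≠ ⊥) (h : I ≤ J) :
    s.contract I ≤ s.contract J :=
  Submodule.comap_mono (s.idealStar_mono hI h)

theorem idealStar_contract {I : Ideal R} (hI : I ≠ ⊥) :
    s.idealStar (s.contract I) = s.idealStar I := by
  have hc : s.contract I ≠ ⊥ := ne_bot_of_le_ne_bot hI (s.le_contract hI)
  refine le_antisymm ?_ (s.idealStar_mono hI (s.le_contract hI))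
  calc s.idealStar (s.contract I) ≤ s.star (s.idealStar I) :=
        s.mono _ _ (map_algebraLinearMap_ne_bot K hc) (Submodule.map_comap_le _ _)
    _ = s.idealStar I := s.star_star _ (map_algebraLinearMap_ne_bot K hI)

theorem contract_contract {I : Ideal R} (hI : I ≠ ⊥) :
    s.contract (s.contract I) = s.contract I :=
  congrArg (Submodule.comap _) (s.idealStar_contract hI)

theorem isStarFinite_contract {F : Ideal R} (hF : F.FG) (hF0 : F ≠ ⊥) :
    s.IsStarFinite (s.contract F) :=
  ⟨ne_bot_of_le_ne_bot hF0 (s.le_contract hF0), F, hF, hF0, (s.idealStar_contract hF0).symm⟩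

theorem mul_mem_contract_mul {I J : Ideal R} (hI : I ≠ ⊥) (hJ : J ≠ ⊥) {x y : R}
    (hx : x ∈ s.contract I) (hy : y ∈ s.contract J) : x * y ∈ s.contract (I * J) := by
  have hxy := s.star_mul_star_le (map_algebraLinearMap_ne_bot K hI)
    (map_algebraLinearMap_ne_bot K hJ) (Submodule.mul_mem_mul hx hy)
  have hmap : Submodule.map (Algebra.linearMap R K) (I * J) =
      Submodule.map (Algebra.linearMap R K) I * Submodule.map (Algebra.linearMap R K) J :=
    Submodule.map_mul I J (Algebra.ofId R K)
  rw [← hmap] at hxy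
  simpa [contract, idealStar] using hxy

theorem pow_mem_contract_pow {I : Ideal R} (hI : I ≠ ⊥) {x : R} (hx : x ∈ s.contract I)
    (n : ℕ) : x ^ n ∈ s.contract (I ^ n) := by
  induction n with
  | zero => simpa using s.le_contract (I := ⊤) top_ne_bot Submodule.mem_top
  | succ n ih =>
    rw [pow_succ, pow_succ]
    exact s.mul_mem_contract_mul (pow_ne_zero n hI) hI ih hx

def radContract (I : Ideal R) : Ideal R := (s.contract I).radical

def IsRadContractClosed (I : Ideal R) : Prop := I ≠ ⊥ ∧ s.radContract I = I

def IsRadContractFG (I : Ideal R) : Prop :=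
  ∃ F : Ideal R, F.FG ∧ F ≠ ⊥ ∧ s.radContract F = I

theorem le_radContract {I : Ideal R} (hI : I ≠ ⊥) : I ≤ s.radContract I :=
  (s.le_contract hI).trans Ideal.le_radical

theorem radContract_mono {I J : Ideal R} (hI : I ≠ ⊥) (h : I ≤ J) :
    s.radContract I ≤ s.radContract J :=
  Ideal.radical_mono (s.contract_mono hI h)

theorem radContract_ne_bot {I : Ideal R} (hI : I ≠ ⊥) : s.radContract I ≠ ⊥ :=
  ne_bot_of_le_ne_bot hI (s.le_radContract hI)

theorem inf_radContract_le_radContract_mul {I J : Ideal R} (hI : I ≠ ⊥) (hJ : J ≠ ⊥) :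
    s.radContract I ⊓ s.radContract J ≤ s.radContract (I * J) := by
  rintro w ⟨⟨p, hp⟩, ⟨q, hq⟩⟩
  exact ⟨p + q, by rw [pow_add]; exact s.mul_mem_contract_mul hI hJ hp hq⟩

theorem isQuasiStarIdeal_and_radical_eq_iff {I : Ideal R} :
    s.IsQuasiStarIdeal I ∧ I.radical = I ↔ s.IsRadContractClosed I := by
  constructor
  · rintro ⟨⟨hI, hIc⟩, hIr⟩
    exact ⟨hI, by rw [radContract, hIc, hIr]⟩
  · rintro ⟨hI, hIc⟩
    refine ⟨⟨hI, le_antisymm (Ideal.le_radical.trans hIc.le) (s.le_contract hI)⟩, ?_⟩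
    rw [← hIc, radContract, Ideal.radical_idem]

theorem exists_radical_starFinite_iff {I : Ideal R} (hIc : s.radContract I = I) :
    (∃ L : Ideal R, s.IsStarFinite L ∧ I = L.radical) ↔ s.IsRadContractFG I := by
  constructor
  · rintro ⟨L, ⟨hL0, F, hF, hF0, hFL⟩, rfl⟩
    have hFL' : s.radContract F = s.radContract L := by
      rw [radContract, radContract, contract, contract, hFL]
    exact ⟨F, hF, hF0, hFL'.trans (le_antisymm (hIc ▸ s.radContract_mono hL0 Ideal.le_radical)
      (Ideal.radical_mono (s.le_contract hL0)))⟩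
  · rintro ⟨F, hF, hF0, rfl⟩
    exact ⟨s.contract F, s.isStarFinite_contract hF hF0, rfl⟩

theorem exists_mem_sSup_le_of_isRadContractFG {c : Set (Ideal R)} (hne : c.Nonempty)
    (hdir : DirectedOn (· ≤ ·) c) (hc : ∀ J ∈ c, s.IsRadContractClosed J)
    (hfg : s.IsRadContractFG (sSup c)) : ∃ P ∈ c, sSup c ≤ P := by
  obtain ⟨F, hF, hF0, hFc⟩ := hfg
  obtain ⟨P, hP, hFP⟩ :=
    Submodule.FG.exists_le_of_le_sSup hF hne hdir (hFc ▸ s.le_radContract hF0)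
  exact ⟨P, hP, hFc ▸ (hc P hP).2 ▸ s.radContract_mono hF0 hFP⟩

variable {s}

theorem exists_fg_le_of_mem_contract (hs : s.FiniteType) {I : Ideal R} (hI : I ≠ ⊥) {x : R}
    (hx : x ∈ s.contract I) : ∃ J : Ideal R, J.FG ∧ J ≠ ⊥ ∧ J ≤ I ∧ x ∈ s.contract J := by
  obtain ⟨F, hF, hF0, hFI, hxF⟩ := (hs _ (map_algebraLinearMap_ne_bot K hI) _).1 hx
  obtain ⟨J, hJ, hJI, rfl⟩ :=
    Submodule.exists_fg_le_map_eq_of_le_map (IsFractionRing.injective R K) hF hFI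
  exact ⟨J, hJ, fun h => hF0 (by rw [h, Submodule.map_bot]), hJI, hxF⟩

theorem radContract_radContract (hs : s.FiniteType) {I : Ideal R} (hI : I ≠ ⊥) :
    s.radContract (s.radContract I) = s.radContract I := by
  refine le_antisymm ?_ (s.le_radContract (s.radContract_ne_bot hI))
  rintro x ⟨n, hn⟩
  obtain ⟨J, hJ, hJ0, hJI, hxJ⟩ := exists_fg_le_of_mem_contract hs (s.radContract_ne_bot hI) hn
  obtain ⟨k, hk⟩ := Ideal.exists_pow_le_of_le_radical_of_fg hJI hJ
  refine ⟨n * k, ?_⟩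
  rw [pow_mul, ← s.contract_contract hI]
  exact s.contract_mono (pow_ne_zero k hJ0) hk (s.pow_mem_contract_pow hJ0 hxJ k)

theorem isRadContractClosed_radContract (hs : s.FiniteType) {I : Ideal R} (hI : I ≠ ⊥) :
    s.IsRadContractClosed (s.radContract I) :=
  ⟨s.radContract_ne_bot hI, radContract_radContract hs hI⟩

theorem exists_fg_le_of_le_radContract (hs : s.FiniteType) {I J : Ideal R} (hI : I ≠ ⊥)
    (hJ : J.FG) (hle : J ≤ s.radContract I) :
    ∃ H : Ideal R, H.FG ∧ H ≠ ⊥ ∧ H ≤ I ∧ J ≤ s.radContract H := by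
  induction J, hJ using Submodule.fg_induction with
  | singleton x =>
    obtain ⟨n, hn⟩ := hle (Submodule.mem_span_singleton_self x)
    obtain ⟨H, hH, hH0, hHI, hxH⟩ := exists_fg_le_of_mem_contract hs hI hn
    exact ⟨H, hH, hH0, hHI, (Submodule.span_singleton_le_iff_mem _ _).2 ⟨n, hxH⟩⟩
  | sup J₁ J₂ _ _ ih₁ ih₂ =>
    obtain ⟨H₁, hH₁, hH₁0, hH₁I, hJH₁⟩ := ih₁ (le_sup_left.trans hle)
    obtain ⟨H₂, hH₂, hH₂0, hH₂I, hJH₂⟩ := ih₂ (le_sup_right.trans hle)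
    refine ⟨H₁ ⊔ H₂, Submodule.FG.sup hH₁ hH₂, ne_bot_of_le_ne_bot hH₁0 le_sup_left,
      sup_le hH₁I hH₂I, sup_le ?_ ?_⟩
    · exact hJH₁.trans (s.radContract_mono hH₁0 le_sup_left)
    · exact hJH₂.trans (s.radContract_mono hH₂0 le_sup_right)

theorem isRadContractClosed_sSup (hs : s.FiniteType) {c : Set (Ideal R)} (hne : c.Nonempty)
    (hdir : DirectedOn (· ≤ ·) c) (hc : ∀ J ∈ c, s.IsRadContractClosed J) :
    s.IsRadContractClosed (sSup c) := by
  obtain ⟨J, hJ⟩ := hne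
  have hc0 : sSup c ≠ ⊥ := ne_bot_of_le_ne_bot (hc J hJ).1 (le_sSup hJ)
  refine ⟨hc0, le_antisymm (fun x hx => ?_) (s.le_radContract hc0)⟩
  obtain ⟨H, hH, hH0, hHc, hxH⟩ := exists_fg_le_of_le_radContract hs hc0
    (Submodule.fg_span_singleton x) ((Submodule.span_singleton_le_iff_mem _ _).2 hx)
  obtain ⟨P, hP, hHP⟩ := Submodule.FG.exists_le_of_le_sSup hH ⟨J, hJ⟩ hdir hHc
  have hxP : x ∈ s.radContract P :=
    s.radContract_mono hH0 hHP (hxH (Submodule.mem_span_singleton_self x))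
  exact le_sSup hP ((hc P hP).2 ▸ hxP)

theorem exists_maximal_not_isRadContractFG (hs : s.FiniteType) {I : Ideal R}
    (hI : s.IsRadContractClosed I) (hIfg : ¬s.IsRadContractFG I) :
    ∃ M, Maximal (fun J => s.IsRadContractClosed J ∧ ¬s.IsRadContractFG J) M := by
  refine (zorn_le_nonempty₀ {J | s.IsRadContractClosed J ∧ ¬s.IsRadContractFG J} ?_ I
    ⟨hI, hIfg⟩).imp fun _ => And.right
  intro c hcS hc J hJ
  have hcc : ∀ J ∈ c, s.IsRadContractClosed J := fun J hJ => (hcS hJ).1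
  refine ⟨sSup c, ⟨isRadContractClosed_sSup hs ⟨J, hJ⟩ hc.directedOn hcc, fun hfg => ?_⟩,
    fun _ => le_sSup⟩
  obtain ⟨P, hP, hcP⟩ := s.exists_mem_sSup_le_of_isRadContractFG ⟨J, hJ⟩ hc.directedOn hcc hfg
  exact (hcS hP).2 (le_antisymm hcP (le_sSup hP) ▸ hfg)

theorem exists_fg_le_sup_span_of_maximal (hs : s.FiniteType) {M : Ideal R}
    (hM : Maximal (fun J => s.IsRadContractClosed J ∧ ¬s.IsRadContractFG J) M)
    {t : R} (ht : t ∉ M) :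
    ∃ H : Ideal R, H.FG ∧ H ≠ ⊥ ∧ H ≤ M ⊔ Ideal.span {t} ∧ M ≤ s.radContract H := by
  have hA0 : M ⊔ Ideal.span {t} ≠ ⊥ := ne_bot_of_le_ne_bot hM.1.1.1 le_sup_left
  have hMA : M ≤ s.radContract (M ⊔ Ideal.span {t}) := le_sup_left.trans (s.le_radContract hA0)
  obtain ⟨F, hF, hF0, hFA⟩ : s.IsRadContractFG (s.radContract (M ⊔ Ideal.span {t})) := by
    by_contra hfg
    have htA : t ∈ s.radContract (M ⊔ Ideal.span {t}) :=
      s.le_radContract hA0 (Submodule.mem_sup_right (Ideal.mem_span_singleton_self t))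
    exact ht (hM.2 ⟨isRadContractClosed_radContract hs hA0, hfg⟩ hMA htA)
  obtain ⟨H, hH, hH0, hHA, hFH⟩ :=
    exists_fg_le_of_le_radContract hs hA0 hF (hFA ▸ s.le_radContract hF0)
  refine ⟨H, hH, hH0, hHA, ?_⟩
  calc M ≤ s.radContract (M ⊔ Ideal.span {t}) := hMA
    _ = s.radContract F := hFA.symm
    _ ≤ s.radContract (s.radContract H) := s.radContract_mono hF0 hFH
    _ = s.radContract H := radContract_radContract hs hH0

theorem isPrime_of_maximal_not_isRadContractFG (hs : s.FiniteType) {M : Ideal R}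
    (hM : Maximal (fun J => s.IsRadContractClosed J ∧ ¬s.IsRadContractFG J) M) :
    M.IsPrime := by
  obtain ⟨⟨hM0, hMc⟩, hMfg⟩ := hM.1
  have hMtop : M ≠ ⊤ := by
    rintro rfl
    exact hMfg ⟨⊤, Ideal.fg_top R, top_ne_bot, hMc⟩
  by_contra hMp
  obtain ⟨x, hx, y, hy, hxy⟩ := (Ideal.not_isPrime_iff.1 hMp).resolve_left hMtop
  obtain ⟨Hx, hHx, hHx0, hHxM, hMHx⟩ := exists_fg_le_sup_span_of_maximal hs hM hx
  obtain ⟨Hy, hHy, hHy0, hHyM, hMHy⟩ := exists_fg_le_sup_span_of_maximal hs hM hy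
  have hHM : Hx * Hy ≤ M := (Ideal.mul_mono hHxM hHyM).trans
    (Ideal.sup_span_singleton_mul_sup_span_singleton_le hxy)
  refine hMfg ⟨Hx * Hy, Submodule.FG.mul hHx hHy, mul_ne_zero hHx0 hHy0, le_antisymm ?_ ?_⟩
  · exact hMc ▸ s.radContract_mono (mul_ne_zero hHx0 hHy0) hHM
  · exact (le_inf hMHx hMHy).trans (s.inf_radContract_le_radContract_mul hHx0 hHy0)

theorem radical_starFinite_of_quasiStarPrime (hs : s.FiniteType)
    (h1 : ∀ P : Ideal R, P.IsPrime → s.IsQuasiStarIdeal P →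
      ∃ L : Ideal R, s.IsStarFinite L ∧ P = L.radical)
    {I : Ideal R} (hIq : s.IsQuasiStarIdeal I) (hIr : I.radical = I) :
    ∃ L : Ideal R, s.IsStarFinite L ∧ I = L.radical := by
  have hI := s.isQuasiStarIdeal_and_radical_eq_iff.1 ⟨hIq, hIr⟩
  refine (s.exists_radical_starFinite_iff hI.2).2 (by_contra fun hIfg => ?_)
  obtain ⟨M, hM⟩ := exists_maximal_not_isRadContractFG hs hI hIfg
  obtain ⟨hMq, -⟩ := s.isQuasiStarIdeal_and_radical_eq_iff.2 hM.1.1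
  exact hM.1.2 ((s.exists_radical_starFinite_iff hM.1.1.2).1
    (h1 M (isPrime_of_maximal_not_isRadContractFG hs hM) hMq))

theorem acc_of_radical_starFinite (hs : s.FiniteType)
    (h2 : ∀ I : Ideal R, s.IsQuasiStarIdeal I → I.radical = I →
      ∃ L : Ideal R, s.IsStarFinite L ∧ I = L.radical)
    (f : ℕ →o Ideal R) (hf : ∀ n, s.IsQuasiStarIdeal (f n) ∧ (f n).radical = f n) :
    ∃ n, ∀ m, n ≤ m → f m = f n := by
  have hc : ∀ J ∈ Set.range f, s.IsRadContractClosed J := by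
    rintro _ ⟨n, rfl⟩
    exact s.isQuasiStarIdeal_and_radical_eq_iff.1 (hf n)
  have hdir : DirectedOn (· ≤ ·) (Set.range f) := directedOn_range.2 f.monotone.directed_le
  have hsup := isRadContractClosed_sSup hs (Set.range_nonempty f) hdir hc
  obtain ⟨hq, hr⟩ := s.isQuasiStarIdeal_and_radical_eq_iff.2 hsup
  obtain ⟨_, ⟨n, rfl⟩, hle⟩ := s.exists_mem_sSup_le_of_isRadContractFG (Set.range_nonempty f)
    hdir hc ((s.exists_radical_starFinite_iff hsup.2).1 (h2 _ hq hr))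
  exact ⟨n, fun m hm => le_antisymm ((le_sSup (Set.mem_range_self m)).trans hle) (f.monotone hm)⟩

theorem radical_starFinite_of_acc (hs : s.FiniteType)
    (hacc : ∀ f : ℕ →o Ideal R, (∀ n, s.IsQuasiStarIdeal (f n) ∧ (f n).radical = f n) →
      ∃ n, ∀ m, n ≤ m → f m = f n)
    {I : Ideal R} (hIq : s.IsQuasiStarIdeal I) (hIr : I.radical = I) :
    ∃ L : Ideal R, s.IsStarFinite L ∧ I = L.radical := by
  obtain ⟨hI0, hIc⟩ := s.isQuasiStarIdeal_and_radical_eq_iff.1 ⟨hIq, hIr⟩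
  refine (s.exists_radical_starFinite_iff hIc).2 ?_
  let S : Set (Ideal R) := {T | ∃ J : Ideal R, J.FG ∧ J ≠ ⊥ ∧ J ≤ I ∧ s.radContract J = T}
  have hS : ∀ T ∈ S, s.IsQuasiStarIdeal T ∧ T.radical = T := by
    rintro _ ⟨J, -, hJ0, -, rfl⟩
    exact s.isQuasiStarIdeal_and_radical_eq_iff.2 (isRadContractClosed_radContract hs hJ0)
  obtain ⟨x, hxI, hx0⟩ := Submodule.exists_mem_ne_zero_of_ne_bot hI0
  have hx : Ideal.span {x} ≠ ⊥ := by simpa [Ideal.span_singleton_eq_bot] using hx0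
  obtain ⟨_, ⟨J, hJ, hJ0, hJI, rfl⟩, hmax⟩ :=
    exists_maximal_of_monotone_chain_condition hacc hS
      ⟨_, Ideal.span {x}, Submodule.fg_span_singleton x, hx,
        (Ideal.span_singleton_le_iff_mem I).2 hxI, rfl⟩
  refine ⟨J, hJ, hJ0, le_antisymm (hIc ▸ s.radContract_mono hJ0 hJI) fun y hy => ?_⟩
  have hJy : J ⊔ Ideal.span {y} ≠ ⊥ := ne_bot_of_le_ne_bot hJ0 le_sup_left
  refine hmax ⟨J ⊔ Ideal.span {y}, Submodule.FG.sup hJ (Submodule.fg_span_singleton y), hJy,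
    sup_le hJI ((Ideal.span_singleton_le_iff_mem I).2 hy), rfl⟩
    (s.radContract_mono hJ0 le_sup_left) ?_
  exact s.le_radContract hJy (Submodule.mem_sup_right (Ideal.mem_span_singleton_self y))

end SemistarOperation

/-- Let `⋆` be a semistar operation of finite type on the integral domain `R`.  The
following are equivalent: (1) each quasi-`⋆`-prime is the radical of a `⋆`-finite
ideal; (2) each radical quasi-`⋆`-ideal is the radical of a `⋆`-finite ideal;
(3) `R` satisfies the a.c.c. on radical quasi-`⋆`-ideals. -/
theorem quasiStarPrime_radical_starFinite_tfae {R K : Type*} [CommRing R] [IsDomain R]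
    [Field K] [Algebra R K] [IsFractionRing R K] (s : SemistarOperation R K)
    (hs : s.FiniteType) :
    ((∀ P : Ideal R, P.IsPrime → s.IsQuasiStarIdeal P →
        ∃ L : Ideal R, s.IsStarFinite L ∧ P = L.radical) ↔
      (∀ I : Ideal R, s.IsQuasiStarIdeal I → I.radical = I →
        ∃ L : Ideal R, s.IsStarFinite L ∧ I = L.radical)) ∧
    ((∀ I : Ideal R, s.IsQuasiStarIdeal I → I.radical = I →
        ∃ L : Ideal R, s.IsStarFinite L ∧ I = L.radical) ↔
      (∀ f : ℕ →o Ideal R, (∀ n, s.IsQuasiStarIdeal (f n) ∧ (f n).radical = f n) →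
        ∃ n, ∀ m, n ≤ m → f m = f n)) :=
  ⟨⟨fun h1 _ => SemistarOperation.radical_starFinite_of_quasiStarPrime hs h1,
      fun h2 P hP hPq => h2 P hPq hP.radical⟩,
    ⟨SemistarOperation.acc_of_radical_starFinite hs,
      fun hacc _ => SemistarOperation.radical_starFinite_of_acc hs hacc⟩⟩
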